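/- arXiv:1101.0435 — 15 statements merged into one kernel-verified Lean document; each statement's English description precedes it below -/
import Mathlib

section
/- In a Hom-dendriform algebra (A, ≺, ≻, α), the operation x ⋆ y = x ≺ y + x ≻ y makes (A, ⋆, α) a Hom-associative algebra, i.e., α(x) ⋆ (y ⋆ z) = (x ⋆ y) ⋆ α(z) for all x, y, z ∈ A. -/
section HomDendriform

variable {R M : Type*} [CommSemiring R] [AddCommMonoid M] [Module R M]

-- `p` and `s` are the operations `≺` and `≻`.
structure IsHomDendriform (p s : M →ₗ[R] M →ₗ[R] M) (α : M →ₗ[R] M) : Prop where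
  left_left : ∀ x y z, p (p x y) (α z) = p (α x) (p y z + s y z)
  right_left : ∀ x y z, p (s x y) (α z) = s (α x) (p y z)
  right_right : ∀ x y z, s (α x) (s y z) = s (p x y + s x y) (α z)

def IsHomAssoc (m : M →ₗ[R] M →ₗ[R] M) (α : M →ₗ[R] M) : Prop :=
  ∀ x y z, m (α x) (m y z) = m (m x y) (α z)

theorem IsHomDendriform.isHomAssoc_add {p s : M →ₗ[R] M →ₗ[R] M} {α : M →ₗ[R] M}
    (h : IsHomDendriform p s α) : IsHomAssoc (p + s) α := by
  intro x y z
  have left_left := h.left_left x y z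
  have right_right := h.right_right x y z
  simp only [LinearMap.add_apply, map_add] at left_left right_right ⊢
  rw [left_left, h.right_left, right_right]
  abel

end HomDendriform

/-- In a Hom-dendriform algebra `(A, ≺, ≻, α)`, the operation `x ⋆ y = x ≺ y + x ≻ y`
makes `(A, ⋆, α)` a Hom-associative algebra. -/
theorem stmt_0 {K A : Type*} [Field K] [AddCommGroup A] [Module K A]
    (p s : A →ₗ[K] A →ₗ[K] A) (α : A →ₗ[K] A)
    (h1 : ∀ x y z : A, p (p x y) (α z) = p (α x) (p y z + s y z))
    (h2 : ∀ x y z : A, p (s x y) (α z) = s (α x) (p y z))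
    (h3 : ∀ x y z : A, s (α x) (s y z) = s (p x y + s x y) (α z))
    (star : A → A → A) (hstar : ∀ x y, star x y = p x y + s x y) :
    ∀ x y z : A, star (α x) (star y z) = star (star x y) (α z) := by
  obtain rfl : star = fun x y => (p + s) x y := by
    funext x y
    exact hstar x y
  exact IsHomDendriform.isHomAssoc_add ⟨h1, h2, h3⟩
end

section
/- In a Hom-dendriform algebra (A, ≺, ≻, α), the operation x ▷ y = x ≻ y − y ≺ x makes (A, ▷, α) a left Hom-preLie algebra: α(x) ▷ (y ▷ z) − (x ▷ y) ▷ α(z) = α(y) ▷ (x ▷ z) − (y ▷ x) ▷ α(z) for all x, y, z ∈ A. -/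
/-!
Expanding `x ▷ y = x ≻ y − y ≺ x` and applying each of the three Hom-dendriform axioms once
brings the Hom-associator `α(x) ▷ (y ▷ z) − (x ▷ y) ▷ α(z)` to
`(x ≺ y + y ≺ x) ≻ α(z) + α(z) ≺ (x ≻ y + y ≻ x) − α(x) ≻ (z ≺ y) − (y ≻ z) ≺ α(x)`.
The first two terms are visibly symmetric in `x, y`, and the middle axiom
`(x ≻ z) ≺ α(y) = α(x) ≻ (z ≺ y)` exchanges the last two under `x ↔ y`.
-/

namespace HomDendriform

variable {R A : Type*} [CommSemiring R] [AddCommGroup A] [Module R A]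
  (p s : A →ₗ[R] A →ₗ[R] A) (α : A →ₗ[R] A)

structure IsHomDendriform : Prop where
  left_left : ∀ x y z, p (p x y) (α z) = p (α x) (p y z + s y z)
  right_left : ∀ x y z, p (s x y) (α z) = s (α x) (p y z)
  right_right : ∀ x y z, s (α x) (s y z) = s (p x y + s x y) (α z)

def preLieMul (x y : A) : A := s x y - p y x

def homAssociator (m : A → A → A) (x y z : A) : A := m (α x) (m y z) - m (m x y) (α z)

def IsLeftHomPreLie (m : A → A → A) : Prop :=
  ∀ x y z, homAssociator α m x y z = homAssociator α m y x z

variable {p s α}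

theorem IsHomDendriform.homAssociator_preLieMul (h : IsHomDendriform p s α) (x y z : A) :
    homAssociator α (preLieMul p s) x y z =
      s (p x y + p y x) (α z) + p (α z) (s x y + s y x) - s (α x) (p z y) - p (s y z) (α x) := by
  simp only [homAssociator, preLieMul, map_sub, map_add, LinearMap.sub_apply,
    LinearMap.add_apply, h.left_left, h.right_right]
  abel

theorem IsHomDendriform.isLeftHomPreLie_preLieMul (h : IsHomDendriform p s α) :
    IsLeftHomPreLie α (preLieMul p s) := by
  intro x y z
  rw [h.homAssociator_preLieMul, h.homAssociator_preLieMul, ← h.right_left x z y,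
    h.right_left y z x, add_comm (p y x), add_comm (s y x)]
  abel

end HomDendriform

/-- In a Hom-dendriform algebra, `x ▷ y = x ≻ y − y ≺ x` gives a left Hom-preLie algebra. -/
theorem stmt_1 {K A : Type*} [Field K] [AddCommGroup A] [Module K A]
    (p s : A →ₗ[K] A →ₗ[K] A) (α : A →ₗ[K] A)
    (h1 : ∀ x y z : A, p (p x y) (α z) = p (α x) (p y z + s y z))
    (h2 : ∀ x y z : A, p (s x y) (α z) = s (α x) (p y z))
    (h3 : ∀ x y z : A, s (α x) (s y z) = s (p x y + s x y) (α z))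
    (t : A → A → A) (ht : ∀ x y, t x y = s x y - p y x) :
    ∀ x y z : A,
      t (α x) (t y z) - t (t x y) (α z) = t (α y) (t x z) - t (t y x) (α z) := by
  obtain rfl : t = HomDendriform.preLieMul p s := funext₂ ht
  exact (HomDendriform.IsHomDendriform.mk h1 h2 h3).isLeftHomPreLie_preLieMul
end

section
/- In a Hom-dendriform algebra (A, ≺, ≻, α), the operation x ◁ y = x ≺ y − y ≻ x makes (A, ◁, α) a right Hom-preLie algebra: α(x) ◁ (y ◁ z) − (x ◁ y) ◁ α(z) = α(x) ◁ (z ◁ y) − (x ◁ z) ◁ α(y) for all x, y, z ∈ A. -/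
/-! The Hom-associator `α(x) ◁ (y ◁ z) − (x ◁ y) ◁ α(z)` of `x ◁ y = x ≺ y − y ≻ x` reduces, after
one application of each Hom-dendriform axiom, to an expression symmetric in `y` and `z`. -/

section HomDendriform

variable {R A : Type*} [CommSemiring R] [AddCommGroup A] [Module R A]
  (p s : A →ₗ[R] A →ₗ[R] A) (α : A →ₗ[R] A)

theorem homDendriform_associator_sub_swap
    (h1 : ∀ x y z : A, p (p x y) (α z) = p (α x) (p y z + s y z))
    (h2 : ∀ x y z : A, p (s x y) (α z) = s (α x) (p y z))
    (h3 : ∀ x y z : A, s (α x) (s y z) = s (p x y + s x y) (α z)) (x y z : A) :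
    p (α x) (p y z - s z y) - s (p y z - s z y) (α x)
        - (p (p x y - s y x) (α z) - s (α z) (p x y - s y x)) =
      s (α y) (p x z) + s (α z) (p x y) - p (α x) (s y z + s z y)
        - s (p y z + p z y) (α x) := by
  simp only [map_sub, map_add, LinearMap.sub_apply, LinearMap.add_apply, h1, h2, h3]
  abel

end HomDendriform

/-- In a Hom-dendriform algebra, `x ◁ y = x ≺ y − y ≻ x` gives a right Hom-preLie algebra. -/
theorem stmt_2 {K A : Type*} [Field K] [AddCommGroup A] [Module K A]
    (p s : A →ₗ[K] A →ₗ[K] A) (α : A →ₗ[K] A)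
    (h1 : ∀ x y z : A, p (p x y) (α z) = p (α x) (p y z + s y z))
    (h2 : ∀ x y z : A, p (s x y) (α z) = s (α x) (p y z))
    (h3 : ∀ x y z : A, s (α x) (s y z) = s (p x y + s x y) (α z))
    (t : A → A → A) (ht : ∀ x y, t x y = p x y - s y x) :
    ∀ x y z : A,
      t (α x) (t y z) - t (t x y) (α z) = t (α x) (t z y) - t (t x z) (α y) := by
  intro x y z
  simp only [ht, homDendriform_associator_sub_swap p s α h1 h2 h3]
  rw [add_comm (s (α z) _), add_comm (s z y), add_comm (p z y)]
end

section
/- Let (A, ≺, ≻) be a dendriform algebra and α : A → A an algebra endomorphism (i.e., α(x ≺ y) = α(x) ≺ α(y) and α(x ≻ y) = α(x) ≻ α(y)). Then (A, ≺_α, ≻_α, α) with x ≺_α y = α(x ≺ y) and x ≻_α y = α(x ≻ y) is a Hom-dendriform algebra. -/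
/-- Twisting a dendriform algebra by an endomorphism yields a Hom-dendriform algebra. -/
theorem stmt_3 {K A : Type*} [Field K] [AddCommGroup A] [Module K A]
    (p s : A →ₗ[K] A →ₗ[K] A) (α : A →ₗ[K] A)
    (h1 : ∀ x y z : A, p (p x y) z = p x (p y z + s y z))
    (h2 : ∀ x y z : A, p (s x y) z = s x (p y z))
    (h3 : ∀ x y z : A, s x (s y z) = s (p x y + s x y) z)
    (hαp : ∀ x y : A, α (p x y) = p (α x) (α y))
    (hαs : ∀ x y : A, α (s x y) = s (α x) (α y))
    (pa sa : A → A → A)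
    (hpa : ∀ x y, pa x y = α (p x y)) (hsa : ∀ x y, sa x y = α (s x y)) :
    (∀ x y z : A, pa (pa x y) (α z) = pa (α x) (pa y z + sa y z)) ∧
    (∀ x y z : A, pa (sa x y) (α z) = sa (α x) (pa y z)) ∧
    (∀ x y z : A, sa (α x) (sa y z) = sa (pa x y + sa x y) (α z)) := by
  -- Each twisted identity is the dendriform one pushed through `α ∘ α`, since
  -- `α (p (α u) (α v)) = α (α (p u v))` and likewise for `s`.
  refine ⟨fun x y z => ?_, fun x y z => ?_, fun x y z => ?_⟩
  · simpa only [hpa, hsa, ← map_add, ← hαp, ← hαs] using congr_arg (fun t => α (α t)) (h1 x y z)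
  · simpa only [hpa, hsa, ← hαp, ← hαs] using congr_arg (fun t => α (α t)) (h2 x y z)
  · simpa only [hpa, hsa, ← map_add, ← hαp, ← hαs] using congr_arg (fun t => α (α t)) (h3 x y z)
end

section
/- Let (A, ≺, ≻, ·, α) be a Hom-tridendriform algebra. Then the operation x ∗ y = x ≺ y + x ≻ y + x · y makes (A, ∗, α) a Hom-associative algebra: α(x) ∗ (y ∗ z) = (x ∗ y) ∗ α(z). -/
/-! Expanding `α x ∗ (y ∗ z)` and `(x ∗ y) ∗ α z` gives nine terms on each side. The first
axiom matches `α x ≺ (y ∗ z)` and the third `(x ∗ y) ≻ α z` as wholes; each of the other five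
axioms matches one of the six remaining terms on the left with one on the right. -/

theorem LinearMap.add_add_homAssoc_of_tridendriform {R M : Type*} [CommSemiring R]
    [AddCommMonoid M] [Module R M] (p s m : M →ₗ[R] M →ₗ[R] M) (α : M →ₗ[R] M)
    (h1 : ∀ x y z : M, p (p x y) (α z) = p (α x) (p y z + s y z + m y z))
    (h2 : ∀ x y z : M, p (s x y) (α z) = s (α x) (p y z))
    (h3 : ∀ x y z : M, s (α x) (s y z) = s (p x y + s x y + m x y) (α z))
    (h4 : ∀ x y z : M, m (p x y) (α z) = m (α x) (s y z))
    (h5 : ∀ x y z : M, m (s x y) (α z) = s (α x) (m y z))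
    (h6 : ∀ x y z : M, p (m x y) (α z) = m (α x) (p y z))
    (h7 : ∀ x y z : M, m (m x y) (α z) = m (α x) (m y z)) (x y z : M) :
    (p + s + m) (α x) ((p + s + m) y z) = (p + s + m) ((p + s + m) x y) (α z) := by
  simp only [LinearMap.add_apply]
  rw [← h1, ← h3]
  simp only [map_add, LinearMap.add_apply, ← h2, ← h4, ← h5, ← h6, ← h7]
  abel

/-- In a Hom-tridendriform algebra, `x ∗ y = x ≺ y + x ≻ y + x · y` is Hom-associative. -/
theorem stmt_5 {K A : Type*} [Field K] [AddCommGroup A] [Module K A]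
    (p s m : A →ₗ[K] A →ₗ[K] A) (α : A →ₗ[K] A)
    (h1 : ∀ x y z : A, p (p x y) (α z) = p (α x) (p y z + s y z + m y z))
    (h2 : ∀ x y z : A, p (s x y) (α z) = s (α x) (p y z))
    (h3 : ∀ x y z : A, s (α x) (s y z) = s (p x y + s x y + m x y) (α z))
    (h4 : ∀ x y z : A, m (p x y) (α z) = m (α x) (s y z))
    (h5 : ∀ x y z : A, m (s x y) (α z) = s (α x) (m y z))
    (h6 : ∀ x y z : A, p (m x y) (α z) = m (α x) (p y z))
    (h7 : ∀ x y z : A, m (m x y) (α z) = m (α x) (m y z))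
    (star : A → A → A) (hstar : ∀ x y, star x y = p x y + s x y + m x y) :
    ∀ x y z : A, star (α x) (star y z) = star (star x y) (α z) := by
  have hstar' : star = fun x y => (p + s + m) x y := by
    funext x y
    simp only [hstar, LinearMap.add_apply]
  subst hstar'
  exact LinearMap.add_add_homAssoc_of_tridendriform p s m α h1 h2 h3 h4 h5 h6 h7
end

section
/- Let (A, ·, R) be an associative Rota-Baxter algebra of weight θ and α : A → A an algebra endomorphism commuting with R (α∘R = R∘α). Then (A, ·_α, α, R) with x ·_α y = α(x·y) is a Hom-associative Rota-Baxter algebra of weight θ: it is Hom-associative and R(x) ·_α R(y) = R(R(x) ·_α y + x ·_α R(y) + θ x ·_α y). -/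
/-- Twisting an associative Rota-Baxter algebra by an endomorphism commuting with `R`
yields a Hom-associative Rota-Baxter algebra. -/
theorem stmt_8 {K A : Type*} [Field K] [AddCommGroup A] [Module K A]
    (μ : A →ₗ[K] A →ₗ[K] A) (α R : A →ₗ[K] A) (θ : K)
    (hassoc : ∀ x y z : A, μ (μ x y) z = μ x (μ y z))
    (hRB : ∀ x y : A, μ (R x) (R y) = R (μ (R x) y + μ x (R y) + θ • μ x y))
    (hα : ∀ x y : A, α (μ x y) = μ (α x) (α y))
    (hcomm : ∀ x : A, α (R x) = R (α x))
    (μα : A → A → A) (hμα : ∀ x y, μα x y = α (μ x y)) :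
    (∀ x y z : A, μα (α x) (μα y z) = μα (μα x y) (α z)) ∧
    (∀ x y : A, μα (R x) (R y) = R (μα (R x) y + μα x (R y) + θ • μα x y)) := by
  -- Pulling every `α` outward (it is multiplicative, linear and commutes with `R`) turns both
  -- identities into `α` applied to associativity and to the Rota-Baxter identity of `μ`.
  refine ⟨fun x y z => ?_, fun x y => ?_⟩
  · simp only [hμα, ← hα, hassoc]
  · simp only [hμα, ← hcomm, ← map_add, ← map_smul]
    rw [(μ x).map_smul, hRB]
end

section
/- Let (A, μ, α, R) be a multiplicative Hom-associative Rota-Baxter algebra of weight θ, where α is invertible and α commutes with R. Then (A, α⁻¹∘μ, R) is an associative Rota-Baxter algebra of weight θ. -/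
/-!
Inverting `α` inverts both compatibilities: `α⁻¹` is again multiplicative and commutes with `R`.
Hom-associativity at `α⁻¹x, α⁻¹y, α⁻¹z` is then associativity of `α⁻¹ ∘ μ`, and the Rota-Baxter
identity survives post-composition of the product with any linear map commuting with `R`.
-/

open Function

theorem Function.Semiconj₂.inverse_left {α β : Type*} {f : α → β} {f' : β → α}
    {ga : α → α → α} {gb : β → β → β} (h : Semiconj₂ f ga gb)
    (hf₁ : LeftInverse f' f) (hf₂ : RightInverse f' f) : Semiconj₂ f' gb ga := fun x y ↦ by
  rw [← hf₁.injective.eq_iff, h, hf₂, hf₂, hf₂]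

theorem Equiv.symm_comp_assoc_of_homAssoc {A : Type*} (e : A ≃ A) (μ : A → A → A)
    (hassoc : ∀ x y z, μ (e x) (μ y z) = μ (μ x y) (e z)) (hmult : Semiconj₂ e μ μ)
    (x y z : A) : e.symm (μ (e.symm (μ x y)) z) = e.symm (μ x (e.symm (μ y z))) := by
  have hsymm : Semiconj₂ e.symm μ μ := hmult.inverse_left e.left_inv e.right_inv
  rw [hsymm x y, hsymm y z]
  simpa only [e.apply_symm_apply] using
    congrArg e.symm (hassoc (e.symm x) (e.symm y) (e.symm z)).symm

def IsRotaBaxter {K A : Type*} [SMul K A] [Add A] (θ : K) (μ : A → A → A) (R : A → A) : Prop :=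
  ∀ x y, μ (R x) (R y) = R (μ (R x) y + μ x (R y) + θ • μ x y)

theorem IsRotaBaxter.linearMap_comp {K A : Type*} [Semiring K] [AddCommMonoid A] [Module K A]
    {θ : K} {μ : A → A → A} {R : A → A} (hRB : IsRotaBaxter θ μ R) (φ : A →ₗ[K] A)
    (hcomm : Semiconj φ R R) : IsRotaBaxter θ (fun x y ↦ φ (μ x y)) R := fun x y ↦ by
  show φ (μ (R x) (R y)) = _
  rw [hRB, hcomm, map_add, map_add, map_smul]

/-- Untwisting a multiplicative Hom-associative Rota-Baxter algebra with invertible `α`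
yields an associative Rota-Baxter algebra. -/
theorem stmt_9 {K A : Type*} [Field K] [AddCommGroup A] [Module K A]
    (μ : A →ₗ[K] A →ₗ[K] A) (α : A ≃ₗ[K] A) (R : A →ₗ[K] A) (θ : K)
    (hassoc : ∀ x y z : A, μ (α x) (μ y z) = μ (μ x y) (α z))
    (hmult : ∀ x y : A, α (μ x y) = μ (α x) (α y))
    (hRB : ∀ x y : A, μ (R x) (R y) = R (μ (R x) y + μ x (R y) + θ • μ x y))
    (hcomm : ∀ x : A, α (R x) = R (α x))
    (μ' : A → A → A) (hμ' : ∀ x y, μ' x y = α.symm (μ x y)) :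
    (∀ x y z : A, μ' (μ' x y) z = μ' x (μ' y z)) ∧
    (∀ x y : A, μ' (R x) (R y) = R (μ' (R x) y + μ' x (R y) + θ • μ' x y)) := by
  obtain rfl : μ' = fun x y ↦ α.symm (μ x y) := funext₂ hμ'
  have hcomm_symm : Semiconj α.symm R R :=
    Semiconj.inverse_left hcomm α.symm_apply_apply α.apply_symm_apply
  exact ⟨Equiv.symm_comp_assoc_of_homAssoc α.toEquiv (fun x y ↦ μ x y) hassoc hmult,
    IsRotaBaxter.linearMap_comp (μ := fun x y ↦ μ x y) hRB α.symm.toLinearMap hcomm_symm⟩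
end

section
/- Let (A, μ, α, R) be a multiplicative Hom-associative Rota-Baxter algebra of weight θ with α∘R = R∘α, and let n ≥ 0. Then the n-th derived Hom-algebra (A, μ⁽ⁿ⁾ = αⁿ∘μ, αⁿ⁺¹, R) is a Hom-associative Rota-Baxter algebra of weight θ. -/
/-!
Composing a product with a multiplicative map `β` preserves Hom-associativity, with twisting map
`α ∘ β`, and composing it with a map commuting with `R` preserves the Rota-Baxter identity.
The `n`-th derived product is the case `β = αⁿ`, which is multiplicative and commutes with `R`
because `α` is and does.
-/

namespace LinearMap

variable {K A : Type*} [CommSemiring K] [AddCommMonoid A] [Module K A]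

def IsHomAssoc (μ : A →ₗ[K] A →ₗ[K] A) (α : A →ₗ[K] A) : Prop :=
  ∀ x y z : A, μ (α x) (μ y z) = μ (μ x y) (α z)

def IsMultiplicative (μ : A →ₗ[K] A →ₗ[K] A) (β : A →ₗ[K] A) : Prop :=
  ∀ x y : A, β (μ x y) = μ (β x) (β y)

def IsRotaBaxter (μ : A →ₗ[K] A →ₗ[K] A) (R : A →ₗ[K] A) (θ : K) : Prop :=
  ∀ x y : A, μ (R x) (R y) = R (μ (R x) y + μ x (R y) + θ • μ x y)

theorem IsMultiplicative.pow {μ : A →ₗ[K] A →ₗ[K] A} {β : A →ₗ[K] A}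
    (hβ : IsMultiplicative μ β) (m : ℕ) : IsMultiplicative μ (β ^ m) := by
  intro x y
  simp only [Module.End.coe_pow]
  exact (Function.Semiconj₂.iterate (f := β) (op := fun x y => μ x y) hβ m) x y

theorem IsHomAssoc.compr₂ {μ : A →ₗ[K] A →ₗ[K] A} {α β : A →ₗ[K] A}
    (hμ : IsHomAssoc μ α) (hβ : IsMultiplicative μ β) :
    IsHomAssoc (μ.compr₂ β) (α * β) := by
  intro x y z
  simp only [compr₂_apply, Module.End.mul_apply]
  rw [hβ y z, hμ, ← hβ x y]

theorem IsRotaBaxter.compr₂ {μ : A →ₗ[K] A →ₗ[K] A} {R β : A →ₗ[K] A} {θ : K}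
    (hR : IsRotaBaxter μ R θ) (hβR : Commute β R) :
    IsRotaBaxter (μ.compr₂ β) R θ := by
  intro x y
  have hβR_apply : ∀ a, β (R a) = R (β a) := LinearMap.ext_iff.mp hβR.eq
  simp only [compr₂_apply, hR x y, hβR_apply, map_add, map_smul]

end LinearMap

open LinearMap in
/-- The `n`-th derived Hom-algebra of a multiplicative Hom-associative Rota-Baxter algebra
is again a Hom-associative Rota-Baxter algebra. -/
theorem stmt_10 {K A : Type*} [Field K] [AddCommGroup A] [Module K A]
    (μ : A →ₗ[K] A →ₗ[K] A) (α R : A →ₗ[K] A) (θ : K) (n : ℕ)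
    (hassoc : ∀ x y z : A, μ (α x) (μ y z) = μ (μ x y) (α z))
    (hmult : ∀ x y : A, α (μ x y) = μ (α x) (α y))
    (hRB : ∀ x y : A, μ (R x) (R y) = R (μ (R x) y + μ x (R y) + θ • μ x y))
    (hcomm : ∀ x : A, α (R x) = R (α x))
    (μn : A → A → A) (hμn : ∀ x y, μn x y = (α ^ n) (μ x y)) :
    (∀ x y z : A, μn ((α ^ (n + 1)) x) (μn y z) = μn (μn x y) ((α ^ (n + 1)) z)) ∧
    (∀ x y : A, μn (R x) (R y) = R (μn (R x) y + μn x (R y) + θ • μn x y)) := by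
  obtain rfl : μn = fun x y => μ.compr₂ (α ^ n) x y := funext₂ hμn
  have hαR : Commute α R := LinearMap.ext hcomm
  refine ⟨?_, IsRotaBaxter.compr₂ hRB (hαR.pow_left n)⟩
  rw [pow_succ']
  exact IsHomAssoc.compr₂ hassoc (IsMultiplicative.pow hmult n)
end

section
/- Let (A, μ, R) be an associative Rota-Baxter algebra of weight θ, α an element of the centroid of A (α(x·y) = α(x)·y = x·α(y)) commuting with R. Then (A, μ¹_α, α, R) with μ¹_α(x,y) = μ(α(x), y) is a Hom-associative Rota-Baxter algebra of weight θ. -/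
/-! Twisting by a centroid element `α` moves `α` freely across products, so both Hom-associativity
and the twisted Rota-Baxter identity reduce to the untwisted ones: the former to associativity
of `μ`, the latter to the Rota-Baxter identity applied to `α x` once `α` is commuted past `R`. -/

section TwistedProduct

variable {K A : Type*} [CommSemiring K] [AddCommMonoid A] [Module K A]
  (μ : A →ₗ[K] A →ₗ[K] A) (α : A →ₗ[K] A)

theorem comp_homAssoc_of_centroid (hassoc : ∀ x y z : A, μ (μ x y) z = μ x (μ y z))
    (hc1 : ∀ x y : A, α (μ x y) = μ (α x) y) (hc2 : ∀ x y : A, α (μ x y) = μ x (α y))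
    (x y z : A) :
    μ.comp α (α x) (μ.comp α y z) = μ.comp α (μ.comp α x y) (α z) := by
  simp only [LinearMap.comp_apply]
  rw [hc1 (α x) y, hassoc, ← hc1 y z, hc2]

theorem comp_rotaBaxter_of_commute {R : A →ₗ[K] A} {θ : K}
    (hRB : ∀ x y : A, μ (R x) (R y) = R (μ (R x) y + μ x (R y) + θ • μ x y))
    (hcomm : ∀ x : A, α (R x) = R (α x)) (x y : A) :
    μ.comp α (R x) (R y) =
      R (μ.comp α (R x) y + μ.comp α x (R y) + θ • μ.comp α x y) := by
  simp only [LinearMap.comp_apply, hcomm]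
  exact hRB (α x) y

end TwistedProduct

/-- A centroid element `α` commuting with `R` turns an associative Rota-Baxter algebra into
a Hom-associative Rota-Baxter algebra via `μ¹_α(x,y) = μ(α x, y)`. -/
theorem stmt_11 {K A : Type*} [Field K] [AddCommGroup A] [Module K A]
    (μ : A →ₗ[K] A →ₗ[K] A) (α R : A →ₗ[K] A) (θ : K)
    (hassoc : ∀ x y z : A, μ (μ x y) z = μ x (μ y z))
    (hRB : ∀ x y : A, μ (R x) (R y) = R (μ (R x) y + μ x (R y) + θ • μ x y))
    (hc1 : ∀ x y : A, α (μ x y) = μ (α x) y)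
    (hc2 : ∀ x y : A, α (μ x y) = μ x (α y))
    (hcomm : ∀ x : A, α (R x) = R (α x))
    (μ1 : A → A → A) (hμ1 : ∀ x y, μ1 x y = μ (α x) y) :
    (∀ x y z : A, μ1 (α x) (μ1 y z) = μ1 (μ1 x y) (α z)) ∧
    (∀ x y : A, μ1 (R x) (R y) = R (μ1 (R x) y + μ1 x (R y) + θ • μ1 x y)) := by
  obtain rfl : μ1 = fun x y => μ.comp α x y := funext₂ hμ1
  exact ⟨comp_homAssoc_of_centroid μ α hassoc hc1 hc2,
    comp_rotaBaxter_of_commute μ α hRB hcomm⟩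
end

section
/- Let (A, μ, R) be an associative Rota-Baxter algebra of weight θ, α an element of the centroid of A commuting with R. Then (A, μ²_α, α, R) with μ²_α(x,y) = μ(α(x), α(y)) is a Hom-associative Rota-Baxter algebra of weight θ. -/
namespace LinearMap

variable {K A : Type*} [CommSemiring K] [AddCommMonoid A] [Module K A]

def IsHomAssociative (μ : A →ₗ[K] A →ₗ[K] A) (α : A →ₗ[K] A) : Prop :=
  ∀ x y z : A, μ (α x) (μ y z) = μ (μ x y) (α z)

theorem IsRotaBaxter.compl₁₂ {μ : A →ₗ[K] A →ₗ[K] A} {R : A →ₗ[K] A} {θ : K}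
    (hRB : IsRotaBaxter μ R θ) {φ ψ : A →ₗ[K] A} (hφ : ∀ x, φ (R x) = R (φ x))
    (hψ : ∀ x, ψ (R x) = R (ψ x)) : IsRotaBaxter (μ.compl₁₂ φ ψ) R θ := by
  intro x y
  simp only [compl₁₂_apply, hφ, hψ]
  exact hRB (φ x) (ψ y)

theorem isHomAssociative_compl₁₂_of_centroid {μ : A →ₗ[K] A →ₗ[K] A} {α : A →ₗ[K] A}
    (hassoc : ∀ x y z : A, μ (μ x y) z = μ x (μ y z))
    (hc1 : ∀ x y : A, α (μ x y) = μ (α x) y) (hc2 : ∀ x y : A, α (μ x y) = μ x (α y)) :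
    IsHomAssociative (μ.compl₁₂ α α) α := by
  intro x y z
  simp only [compl₁₂_apply, hc1 (α x), hc2 _ (α z), hassoc]

end LinearMap

/-- A centroid element `α` commuting with `R` turns an associative Rota-Baxter algebra into
a Hom-associative Rota-Baxter algebra via `μ²_α(x,y) = μ(α x, α y)`. -/
theorem stmt_12 {K A : Type*} [Field K] [AddCommGroup A] [Module K A]
    (μ : A →ₗ[K] A →ₗ[K] A) (α R : A →ₗ[K] A) (θ : K)
    (hassoc : ∀ x y z : A, μ (μ x y) z = μ x (μ y z))
    (hRB : ∀ x y : A, μ (R x) (R y) = R (μ (R x) y + μ x (R y) + θ • μ x y))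
    (hc1 : ∀ x y : A, α (μ x y) = μ (α x) y)
    (hc2 : ∀ x y : A, α (μ x y) = μ x (α y))
    (hcomm : ∀ x : A, α (R x) = R (α x))
    (μ2 : A → A → A) (hμ2 : ∀ x y, μ2 x y = μ (α x) (α y)) :
    (∀ x y z : A, μ2 (α x) (μ2 y z) = μ2 (μ2 x y) (α z)) ∧
    (∀ x y : A, μ2 (R x) (R y) = R (μ2 (R x) y + μ2 x (R y) + θ • μ2 x y)) := by
  obtain rfl : μ2 = fun x y => μ.compl₁₂ α α x y := funext₂ hμ2
  exact ⟨LinearMap.isHomAssociative_compl₁₂_of_centroid hassoc hc1 hc2,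
    LinearMap.IsRotaBaxter.compl₁₂ hRB hcomm hcomm⟩
end

section
/- Let (A, ·, α, R) be a Hom-associative Rota-Baxter algebra of weight 0 with α∘R = R∘α. Define x ∗ y = R(x)·y − y·R(x). Then (A, ∗, α) is a left Hom-preLie algebra: α(x)∗(y∗z) − (x∗y)∗α(z) = α(y)∗(x∗z) − (y∗x)∗α(z). -/
/-!
Write `x ∗ y = [R x, y]` with `[a, b] = a·b − b·a`. The Rota-Baxter identity gives
`R (x ∗ y − y ∗ x) = [R x, R y]`, so after antisymmetrising in `x, y` the Hom-preLie identity
becomes the Hom-Jacobi identity of the commutator bracket of the Hom-associative algebra,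
evaluated at `R x, R y, z`; `α ∘ R = R ∘ α` matches the twists.
-/

section HomAssociative

variable {K A : Type*} [CommRing K] [AddCommGroup A] [Module K A]

theorem commutator_homJacobi (μ : A →ₗ[K] A →ₗ[K] A) (α : A → A)
    (hassoc : ∀ x y z : A, μ (α x) (μ y z) = μ (μ x y) (α z)) (a b z : A) :
    (μ - μ.flip) (α a) ((μ - μ.flip) b z) - (μ - μ.flip) (α b) ((μ - μ.flip) a z) =
      (μ - μ.flip) ((μ - μ.flip) a b) (α z) := by
  simp only [map_sub, LinearMap.sub_apply, LinearMap.flip_apply]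
  linear_combination (norm := abel) hassoc a b z - hassoc a z b + hassoc z a b
    - hassoc b a z + hassoc b z a - hassoc z b a

theorem rotaBaxter_map_commutator_sub (μ : A →ₗ[K] A →ₗ[K] A) (R : A →ₗ[K] A)
    (hRB : ∀ x y : A, μ (R x) (R y) = R (μ (R x) y + μ x (R y))) (x y : A) :
    R ((μ - μ.flip) (R x) y - (μ - μ.flip) (R y) x) = (μ - μ.flip) (R x) (R y) := by
  have hsplit : (μ - μ.flip) (R x) y - (μ - μ.flip) (R y) x =
      (μ (R x) y + μ x (R y)) - (μ (R y) x + μ y (R x)) := by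
    simp only [LinearMap.sub_apply, LinearMap.flip_apply]; abel
  rw [hsplit, map_sub, ← hRB, ← hRB]; rfl

end HomAssociative

/-- For a weight-0 Hom-associative Rota-Baxter algebra, `x ∗ y = R(x)·y − y·R(x)` is left
Hom-preLie. -/
theorem stmt_13 {K A : Type*} [Field K] [AddCommGroup A] [Module K A]
    (μ : A →ₗ[K] A →ₗ[K] A) (α R : A →ₗ[K] A)
    (hassoc : ∀ x y z : A, μ (α x) (μ y z) = μ (μ x y) (α z))
    (hRB : ∀ x y : A, μ (R x) (R y) = R (μ (R x) y + μ x (R y)))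
    (hcomm : ∀ x : A, α (R x) = R (α x))
    (t : A → A → A) (ht : ∀ x y, t x y = μ (R x) y - μ y (R x)) :
    ∀ x y z : A,
      t (α x) (t y z) - t (t x y) (α z) = t (α y) (t x z) - t (t y x) (α z) := by
  intro x y z
  set c := μ - μ.flip
  have ht' : ∀ a b, t a b = c (R a) b := ht
  have hJacobi := commutator_homJacobi μ α hassoc (R x) (R y) z
  have hRc := congrArg (c · (α z)) (rotaBaxter_map_commutator_sub μ R hRB x y)
  rw [hcomm, hcomm] at hJacobi
  rw [map_sub, map_sub, LinearMap.sub_apply] at hRc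
  simp only [ht']
  linear_combination (norm := abel) hJacobi - hRc
end

section
/- Let (A, ·, α, R) be a Hom-associative Rota-Baxter algebra of weight −1 with α∘R = R∘α. Define x ∗ y = R(x)·y − y·R(x) − x·y. Then (A, ∗, α) is a left Hom-preLie algebra. -/
/-!
Write `X = R x`, `Y = R y` and `x ∗ y = X·y − y·X − x·y`. Hom-associativity and `α ∘ R = R ∘ α` show that the
Hom-associator `as(x, y, z) = α(x) ∗ (y ∗ z) − (x ∗ y) ∗ α(z)` is symmetric in `x, y` up to the
commutator of `α(z)` with the antisymmetric part of `D(x, y) = X·Y − R(x ∗ y)`. The Rota-Baxter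
identity of weight `−1` gives `D(x, y) = R(x·Y) + R(y·X)`, which is symmetric.
-/

namespace HomRotaBaxter

variable {K A : Type*} [CommSemiring K] [AddCommGroup A] [Module K A]

def homAssociator (m : A → A → A) (α : A → A) (x y z : A) : A :=
  m (α x) (m y z) - m (m x y) (α z)

def rbProduct (μ : A →ₗ[K] A →ₗ[K] A) (R : A →ₗ[K] A) (x y : A) : A :=
  μ (R x) y - μ y (R x) - μ x y

def rbDefect (μ : A →ₗ[K] A →ₗ[K] A) (R : A →ₗ[K] A) (x y : A) : A :=
  μ (R x) (R y) - R (rbProduct μ R x y)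

theorem homAssociator_rbProduct_sub_swap (μ : A →ₗ[K] A →ₗ[K] A) (α R : A →ₗ[K] A)
    (hassoc : ∀ x y z : A, μ (α x) (μ y z) = μ (μ x y) (α z))
    (hcomm : ∀ x : A, α (R x) = R (α x)) (x y z : A) :
    homAssociator (rbProduct μ R) α x y z - homAssociator (rbProduct μ R) α y x z =
      μ (rbDefect μ R x y - rbDefect μ R y x) (α z) -
        μ (α z) (rbDefect μ R x y - rbDefect μ R y x) := by
  simp only [homAssociator, rbDefect, rbProduct, map_sub, LinearMap.sub_apply, ← hcomm, hassoc]
  abel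

theorem rbDefect_eq_of_rotaBaxter (μ : A →ₗ[K] A →ₗ[K] A) (R : A →ₗ[K] A)
    (hRB : ∀ x y : A, μ (R x) (R y) = R (μ (R x) y + μ x (R y) - μ x y)) (x y : A) :
    rbDefect μ R x y = R (μ x (R y)) + R (μ y (R x)) := by
  simp only [rbDefect, rbProduct, hRB, map_add, map_sub]
  abel

end HomRotaBaxter

open HomRotaBaxter in
/-- For a weight-(−1) Hom-associative Rota-Baxter algebra,
`x ∗ y = R(x)·y − y·R(x) − x·y` is left Hom-preLie. -/
theorem stmt_14 {K A : Type*} [Field K] [AddCommGroup A] [Module K A]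
    (μ : A →ₗ[K] A →ₗ[K] A) (α R : A →ₗ[K] A)
    (hassoc : ∀ x y z : A, μ (α x) (μ y z) = μ (μ x y) (α z))
    (hRB : ∀ x y : A, μ (R x) (R y) = R (μ (R x) y + μ x (R y) - μ x y))
    (hcomm : ∀ x : A, α (R x) = R (α x))
    (t : A → A → A) (ht : ∀ x y, t x y = μ (R x) y - μ y (R x) - μ x y) :
    ∀ x y z : A,
      t (α x) (t y z) - t (t x y) (α z) = t (α y) (t x z) - t (t y x) (α z) := by
  obtain rfl : t = rbProduct μ R := funext₂ ht
  intro x y z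
  have hsymm : rbDefect μ R x y - rbDefect μ R y x = 0 := by
    rw [rbDefect_eq_of_rotaBaxter μ R hRB, rbDefect_eq_of_rotaBaxter μ R hRB, add_comm, sub_self]
  have h := homAssociator_rbProduct_sub_swap μ α R hassoc hcomm x y z
  rwa [hsymm, map_zero, LinearMap.zero_apply, map_zero, sub_zero, sub_eq_zero] at h
end

section
/- Let (A, ·, α, R) be a Hom-associative Rota-Baxter algebra of weight 0 with α∘R = R∘α. Define x ≺ y = x·R(y) and x ≻ y = R(x)·y. Then (A, ≺, ≻, α) is a Hom-dendriform algebra. -/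
section HomDendriform

variable {A : Type*}

def IsHomAssociative (μ : A → A → A) (α : A → A) : Prop :=
  ∀ x y z, μ (α x) (μ y z) = μ (μ x y) (α z)

def IsRotaBaxterWeightZero [Add A] (μ : A → A → A) (R : A → A) : Prop :=
  ∀ x y, μ (R x) (R y) = R (μ (R x) y + μ x (R y))

def IsHomDendriform_s15 [Add A] (prec succ : A → A → A) (α : A → A) : Prop :=
  (∀ x y z, prec (prec x y) (α z) = prec (α x) (prec y z + succ y z)) ∧
  (∀ x y z, prec (succ x y) (α z) = succ (α x) (prec y z)) ∧
  (∀ x y z, succ (α x) (succ y z) = succ (prec x y + succ x y) (α z))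

def rotaBaxterPrec (μ : A → A → A) (R : A → A) (x y : A) : A := μ x (R y)

def rotaBaxterSucc (μ : A → A → A) (R : A → A) (x y : A) : A := μ (R x) y

/-- Each axiom reduces, after moving `α` past `R`, to one instance of Hom-associativity,
with the Rota-Baxter identity collapsing `R (x ≺ y + x ≻ y)` to `R x · R y`. -/
theorem IsHomDendriform_s15.of_rotaBaxter [AddCommMagma A] {μ : A → A → A} {α R : A → A}
    (hassoc : IsHomAssociative μ α) (hRB : IsRotaBaxterWeightZero μ R)
    (hcomm : Function.Commute α R) :
    IsHomDendriform_s15 (rotaBaxterPrec μ R) (rotaBaxterSucc μ R) α := by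
  refine ⟨fun x y z => ?_, fun x y z => ?_, fun x y z => ?_⟩ <;>
    simp only [rotaBaxterPrec, rotaBaxterSucc]
  · rw [← hcomm, add_comm, ← hRB, hassoc]
  · rw [← hcomm, ← hcomm, hassoc]
  · rw [← hcomm, hassoc, hRB, add_comm]

end HomDendriform

/-- For a weight-0 Hom-associative Rota-Baxter algebra, `x ≺ y = x·R(y)`, `x ≻ y = R(x)·y`
define a Hom-dendriform algebra. -/
theorem stmt_15 {K A : Type*} [Field K] [AddCommGroup A] [Module K A]
    (μ : A →ₗ[K] A →ₗ[K] A) (α R : A →ₗ[K] A)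
    (hassoc : ∀ x y z : A, μ (α x) (μ y z) = μ (μ x y) (α z))
    (hRB : ∀ x y : A, μ (R x) (R y) = R (μ (R x) y + μ x (R y)))
    (hcomm : ∀ x : A, α (R x) = R (α x))
    (p s : A → A → A)
    (hp : ∀ x y, p x y = μ x (R y)) (hs : ∀ x y, s x y = μ (R x) y) :
    (∀ x y z : A, p (p x y) (α z) = p (α x) (p y z + s y z)) ∧
    (∀ x y z : A, p (s x y) (α z) = s (α x) (p y z)) ∧
    (∀ x y z : A, s (α x) (s y z) = s (p x y + s x y) (α z)) := by
  obtain rfl : p = rotaBaxterPrec (fun x y => μ x y) R := funext₂ hp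
  obtain rfl : s = rotaBaxterSucc (fun x y => μ x y) R := funext₂ hs
  exact IsHomDendriform_s15.of_rotaBaxter (μ := fun x y => μ x y) hassoc hRB hcomm
end

section
/- Let (A, ·, α, R) be a Hom-associative Rota-Baxter algebra of weight θ with α∘R = R∘α. Define x ≺ y = x·R(y) + θ x·y and x ≻ y = R(x)·y. Then (A, ≺, ≻, α) is a Hom-dendriform algebra. -/
/-!
Write `x ⋆ y = R x · y + x · R y + θ x · y`, so that the Rota–Baxter identity reads
`R x · R y = R (x ⋆ y)` and `x ≺ y + x ≻ y = x ⋆ y`. Moving `R` past `α` with `α ∘ R = R ∘ α`,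
each dendriform axiom becomes Hom-associativity applied term by term, with the Rota–Baxter
identity absorbing the products `R y · R z` and `R x · R y`.
-/

section HomRotaBaxter

variable {K A : Type*} [CommRing K] [AddCommGroup A] [Module K A]
  (μ : A →ₗ[K] A →ₗ[K] A) (α R : A →ₗ[K] A) (θ : K)

def rotaBaxterLeft (x y : A) : A := μ x (R y) + θ • μ x y

def rotaBaxterRight (x y : A) : A := μ (R x) y

theorem rotaBaxterLeft_add_rotaBaxterRight (x y : A) :
    rotaBaxterLeft μ R θ x y + rotaBaxterRight μ R x y = μ (R x) y + μ x (R y) + θ • μ x y := by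
  unfold rotaBaxterLeft rotaBaxterRight
  abel

variable {μ α R θ}

theorem rotaBaxterLeft_rotaBaxterLeft
    (hassoc : ∀ x y z : A, μ (α x) (μ y z) = μ (μ x y) (α z))
    (hRB : ∀ x y : A, μ (R x) (R y) = R (μ (R x) y + μ x (R y) + θ • μ x y))
    (hcomm : ∀ x : A, α (R x) = R (α x)) (x y z : A) :
    rotaBaxterLeft μ R θ (rotaBaxterLeft μ R θ x y) (α z) =
      rotaBaxterLeft μ R θ (α x) (rotaBaxterLeft μ R θ y z + rotaBaxterRight μ R y z) := by
  rw [rotaBaxterLeft_add_rotaBaxterRight]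
  simp only [rotaBaxterLeft, ← hcomm, ← hassoc, hRB, map_add, map_smul,
    LinearMap.add_apply, LinearMap.smul_apply]
  module

theorem rotaBaxterLeft_rotaBaxterRight
    (hassoc : ∀ x y z : A, μ (α x) (μ y z) = μ (μ x y) (α z))
    (hcomm : ∀ x : A, α (R x) = R (α x)) (x y z : A) :
    rotaBaxterLeft μ R θ (rotaBaxterRight μ R x y) (α z) =
      rotaBaxterRight μ R (α x) (rotaBaxterLeft μ R θ y z) := by
  simp only [rotaBaxterLeft, rotaBaxterRight, ← hcomm, ← hassoc, map_add, map_smul]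

theorem rotaBaxterRight_rotaBaxterRight
    (hassoc : ∀ x y z : A, μ (α x) (μ y z) = μ (μ x y) (α z))
    (hRB : ∀ x y : A, μ (R x) (R y) = R (μ (R x) y + μ x (R y) + θ • μ x y))
    (hcomm : ∀ x : A, α (R x) = R (α x)) (x y z : A) :
    rotaBaxterRight μ R (α x) (rotaBaxterRight μ R y z) =
      rotaBaxterRight μ R (rotaBaxterLeft μ R θ x y + rotaBaxterRight μ R x y) (α z) := by
  rw [rotaBaxterLeft_add_rotaBaxterRight]
  simp only [rotaBaxterRight, ← hcomm, hassoc, ← hRB]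

end HomRotaBaxter

/-- For a weight-`θ` Hom-associative Rota-Baxter algebra, `x ≺ y = x·R(y) + θ x·y`,
`x ≻ y = R(x)·y` define a Hom-dendriform algebra. -/
theorem stmt_16 {K A : Type*} [Field K] [AddCommGroup A] [Module K A]
    (μ : A →ₗ[K] A →ₗ[K] A) (α R : A →ₗ[K] A) (θ : K)
    (hassoc : ∀ x y z : A, μ (α x) (μ y z) = μ (μ x y) (α z))
    (hRB : ∀ x y : A, μ (R x) (R y) = R (μ (R x) y + μ x (R y) + θ • μ x y))
    (hcomm : ∀ x : A, α (R x) = R (α x))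
    (p s : A → A → A)
    (hp : ∀ x y, p x y = μ x (R y) + θ • μ x y) (hs : ∀ x y, s x y = μ (R x) y) :
    (∀ x y z : A, p (p x y) (α z) = p (α x) (p y z + s y z)) ∧
    (∀ x y z : A, p (s x y) (α z) = s (α x) (p y z)) ∧
    (∀ x y z : A, s (α x) (s y z) = s (p x y + s x y) (α z)) := by
  obtain rfl : p = rotaBaxterLeft μ R θ := funext₂ hp
  obtain rfl : s = rotaBaxterRight μ R := funext₂ hs
  exact ⟨rotaBaxterLeft_rotaBaxterLeft hassoc hRB hcomm,
    rotaBaxterLeft_rotaBaxterRight hassoc hcomm,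
    rotaBaxterRight_rotaBaxterRight hassoc hRB hcomm⟩
end

section
/- Let (g, [·,·], α, R) be a Hom-Lie Rota-Baxter algebra of weight 0 with α∘R = R∘α. Define x ∗ y = [R(x), y]. Then (g, ∗, α) is a left Hom-preLie algebra: α(x)∗(y∗z) − (x∗y)∗α(z) = α(y)∗(x∗z) − (y∗x)∗α(z). -/
/-!
Apply the Hom-Jacobi identity to `R x, R y, z`. Since `α` commutes with `R`, the first two
terms become `α(x) ∗ (y ∗ z)` and `-α(y) ∗ (x ∗ z)`, and by the Rota-Baxter identity (with
skew-symmetry) the third is `-[R(x ∗ y - y ∗ x), α z] = -(x ∗ y) ∗ α(z) + (y ∗ x) ∗ α(z)`.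
-/

section RotaBaxter

variable {K L : Type*} [CommSemiring K] [AddCommGroup L] [Module K L]
  (b : L →ₗ[K] L →ₗ[K] L) (α R : L →ₗ[K] L)

theorem bracket_rotaBaxter_eq_rotaBaxter_sub (hskew : ∀ x y : L, b x y = - b y x)
    (hRB : ∀ x y : L, b (R x) (R y) = R (b (R x) y + b x (R y))) (x y : L) :
    b (R x) (R y) = R (b (R x) y - b (R y) x) := by
  rw [hRB, hskew x (R y), sub_eq_add_neg]

theorem rotaBaxter_homPreLie (hskew : ∀ x y : L, b x y = - b y x)
    (hjac : ∀ x y z : L, b (α x) (b y z) + b (α y) (b z x) + b (α z) (b x y) = 0)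
    (hRB : ∀ x y : L, b (R x) (R y) = R (b (R x) y + b x (R y)))
    (hcomm : ∀ x : L, α (R x) = R (α x)) (x y z : L) :
    b (R (α x)) (b (R y) z) - b (R (b (R x) y)) (α z)
      = b (R (α y)) (b (R x) z) - b (R (b (R y) x)) (α z) := by
  have hjacR := hjac (R x) (R y) z
  rw [hcomm, hcomm, hskew z (R x), map_neg,
    bracket_rotaBaxter_eq_rotaBaxter_sub b R hskew hRB, hskew (α z), map_sub, map_sub,
    LinearMap.sub_apply] at hjacR
  linear_combination (norm := abel) hjacR

end RotaBaxter

/-- For a weight-0 Hom-Lie Rota-Baxter algebra, `x ∗ y = [R(x), y]` is left Hom-preLie. -/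
theorem stmt_19 {K L : Type*} [Field K] [AddCommGroup L] [Module K L]
    (b : L →ₗ[K] L →ₗ[K] L) (α R : L →ₗ[K] L)
    (hskew : ∀ x y : L, b x y = - b y x)
    (hjac : ∀ x y z : L, b (α x) (b y z) + b (α y) (b z x) + b (α z) (b x y) = 0)
    (hRB : ∀ x y : L, b (R x) (R y) = R (b (R x) y + b x (R y)))
    (hcomm : ∀ x : L, α (R x) = R (α x))
    (t : L → L → L) (ht : ∀ x y, t x y = b (R x) y) :
    ∀ x y z : L,
      t (α x) (t y z) - t (t x y) (α z) = t (α y) (t x z) - t (t y x) (α z) := by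
  intro x y z
  simp only [ht]
  exact rotaBaxter_homPreLie b α R hskew hjac hRB hcomm x y z
end
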